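/- For every integer n ≥ 5, the commutator subgroup GVB_n' of the generalized virtual braid group GVB_n is generated by a set of at most 3n − 7 elements; i.e., there exists a subset S of GVB_n with cardinality at most 3n − 7 whose generated subgroup equals [GVB_n, GVB_n]. -/

import Mathlib

/-!
Indices start at `0`, as for `σ n` and `ρ n`: the generators are `σ_0, …, σ_{n-2}` and
`ρ_0, …, ρ_{n-2}`.

The elements `σ_k σ_0⁻¹`, `ρ_k ρ_0⁻¹` (`1 ≤ k ≤ n - 2`) and `⁅σ_0, ρ_0⁆` are `2n - 3 ≤ 3n - 7`
commutators, since the `σ_k` are pairwise conjugate, and so are the `ρ_k`. Let `N` be the subgroup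
they generate. Modulo `N` the group is generated by the commuting images of `σ_0` and `ρ_0`, so `N`
contains the commutator subgroup as soon as `σ_0` and `ρ_0` normalize it.

The braid relations alone make `σ_0` normalize the subgroup generated by the `σ_k σ_0⁻¹`; this uses
`σ_3`, which commutes with `σ_0` and `σ_1` (hence `n ≥ 5`). Conjugating the other generators of `N`
by powers of `σ_0` or `ρ_0` then only brings in the commutators `⁅σ_0 ^ p, ρ_j⁆` and
`⁅ρ_0 ^ p, σ_j⁆` with `j ≤ 1`. The elements of `N` commuting with `σ_3` and `ρ_3` form a subgroup
normalized by `σ_0, σ_1, ρ_0, ρ_1`, because on it conjugation by `σ_i` agrees with conjugation by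
`σ_i σ_3⁻¹ ∈ N`. It contains `⁅σ_0, ρ_0⁆`, and the mixed relations, which say that `σ_0 σ_1` and
`σ_1 σ_0` conjugate `ρ_0` and `ρ_1` into each other, produce from it the other `⁅σ_i, ρ_j⁆` with
`i, j ≤ 1`.
-/

namespace GenVirtBraid

/-- The free-group generator word for `σ_{i+1}` (0-indexed `i`). -/
def σw (n : ℕ) (i : Fin (n-1)) : FreeGroup (Fin (n-1) ⊕ Fin (n-1)) := FreeGroup.of (Sum.inl i)

/-- The free-group generator word for `ρ_{i+1}` (0-indexed `i`). -/
def ρw (n : ℕ) (i : Fin (n-1)) : FreeGroup (Fin (n-1) ⊕ Fin (n-1)) := FreeGroup.of (Sum.inr i)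

/-- Defining relators of the generalized virtual braid group `GVB_n`. -/
def gvbRels (n : ℕ) : Set (FreeGroup (Fin (n-1) ⊕ Fin (n-1))) :=
  {r | ∃ i j : Fin (n-1), ((i:ℕ)+1 < (j:ℕ) ∨ (j:ℕ)+1 < (i:ℕ)) ∧
      r = σw n i * σw n j * (σw n i)⁻¹ * (σw n j)⁻¹} ∪
  {r | ∃ i j : Fin (n-1), (j:ℕ) = (i:ℕ)+1 ∧
      r = σw n i * σw n j * σw n i * (σw n j * σw n i * σw n j)⁻¹} ∪
  {r | ∃ i j : Fin (n-1), ((i:ℕ)+1 < (j:ℕ) ∨ (j:ℕ)+1 < (i:ℕ)) ∧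
      r = ρw n i * ρw n j * (ρw n i)⁻¹ * (ρw n j)⁻¹} ∪
  {r | ∃ i j : Fin (n-1), (j:ℕ) = (i:ℕ)+1 ∧
      r = ρw n i * ρw n j * ρw n i * (ρw n j * ρw n i * ρw n j)⁻¹} ∪
  {r | ∃ i j : Fin (n-1), (j:ℕ) = (i:ℕ)+1 ∧
      r = ρw n i * σw n j * σw n i * (σw n j * σw n i * ρw n j)⁻¹} ∪
  {r | ∃ i j : Fin (n-1), (j:ℕ) = (i:ℕ)+1 ∧
      r = ρw n j * σw n i * σw n j * (σw n i * σw n j * ρw n i)⁻¹} ∪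
  {r | ∃ i j : Fin (n-1), ((i:ℕ)+1 < (j:ℕ) ∨ (j:ℕ)+1 < (i:ℕ)) ∧
      r = σw n i * ρw n j * (σw n i)⁻¹ * (ρw n j)⁻¹}

/-- The generalized virtual braid group `GVB_n` (Fang's presentation). -/
abbrev GVB (n : ℕ) := PresentedGroup (gvbRels n)

/-- The generator `σ_{i+1}` of `GVB_n` (0-indexed `i`). -/
def σ (n : ℕ) (i : Fin (n-1)) : GVB n := PresentedGroup.of (Sum.inl i)

/-- The generator `ρ_{i+1}` of `GVB_n` (0-indexed `i`). -/
def ρ (n : ℕ) (i : Fin (n-1)) : GVB n := PresentedGroup.of (Sum.inr i)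

end GenVirtBraid

open Subgroup
open scoped commutatorElement

section GroupLemmas

variable {G : Type*} [Group G]

theorem conj_mem_of_mul_mem {N : Subgroup G} {g w t : G} (hgw : g * w ∈ N) (hwt : Commute w t)
    (ht : t ∈ N) : g * t * g⁻¹ ∈ N := by
  have : g * t * g⁻¹ = (g * w) * t * (g * w)⁻¹ := by
    rw [mul_assoc g w, hwt.eq]; group
  rw [this]
  exact mul_mem (mul_mem hgw ht) (inv_mem hgw)

theorem conj_mul_inv_mem {N : Subgroup G} {g y y₀ : G} (hy : ⁅g, y⁆ ∈ N) (hy₀ : ⁅g, y₀⁆ ∈ N)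
    (h : y * y₀⁻¹ ∈ N) : g * (y * y₀⁻¹) * g⁻¹ ∈ N := by
  have : g * (y * y₀⁻¹) * g⁻¹ = ⁅g, y⁆ * (y * y₀⁻¹) * ⁅g, y₀⁆⁻¹ := by
    simp only [commutatorElement_def]; group
  rw [this]
  exact mul_mem (mul_mem hy h) (inv_mem hy₀)

theorem commutatorElement_eq_of_conj_eq {x y r r' : G} (h : x * y * r * (x * y)⁻¹ = r') :
    ⁅r', x⁆ = x * y * (r * r'⁻¹) * (x * y)⁻¹ * (x * ⁅y, r'⁆ * x⁻¹) := by
  subst h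
  simp only [commutatorElement_def]
  group

theorem mem_normalizer_closure_of_conj {S : Set G} {g : G}
    (h₁ : ∀ s ∈ S, g * s * g⁻¹ ∈ closure S) (h₂ : ∀ s ∈ S, g⁻¹ * s * g ∈ closure S) :
    g ∈ normalizer (closure S : Set G) := by
  rw [mem_normalizer_iff_map_conj_eq, MonoidHom.map_closure]
  refine le_antisymm ((closure_le _).mpr ?_) ((closure_le _).mpr fun s hs => ?_)
  · rintro _ ⟨s, hs, rfl⟩
    exact h₁ s hs
  · rw [← MonoidHom.map_closure]
    exact ⟨_, h₂ s hs, by simp [mul_assoc]⟩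

theorem mem_normalizer_inf_centralizer {N : Subgroup G} {T : Set G} {g z : G} (hz : z ∈ T)
    (hg : g ∈ centralizer T) (h₁ : g * z⁻¹ ∈ N) (h₂ : g⁻¹ * z ∈ N) :
    g ∈ normalizer ((N ⊓ centralizer T : Subgroup G) : Set G) := by
  have hzt : ∀ t ∈ centralizer T, Commute z t := fun t ht => mem_centralizer_iff.mp ht z hz
  refine mem_normalizer_iff.mpr fun t => ?_
  simp only [mem_inf]
  refine ⟨fun ⟨htN, htC⟩ => ⟨?_, ?_⟩, fun ⟨htN, htC⟩ => ⟨?_, ?_⟩⟩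
  · exact conj_mem_of_mul_mem h₁ (hzt t htC).inv_left htN
  · exact mul_mem (mul_mem hg htC) (inv_mem hg)
  · simpa [mul_assoc] using conj_mem_of_mul_mem h₂ (hzt _ htC) htN
  · simpa [mul_assoc] using mul_mem (mul_mem (inv_mem hg) htC) hg

theorem commutatorElement_mem_of_mem_closure {K : Subgroup G} {X : Set G} {y g : G}
    (hX : closure X ≤ normalizer (K : Set G)) (hy : ∀ x ∈ X, ⁅x, y⁆ ∈ K)
    (hg : g ∈ closure X) : ⁅g, y⁆ ∈ K := by
  induction hg using closure_induction with
  | mem x hx => exact hy x hx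
  | one => simp
  | mul g h hg _ ihg ihh =>
    rw [commutatorElement_mul_left_eq_conj_mul]
    exact mul_mem ((mem_normalizer_iff.mp (hX hg) _).mp ihh) ihg
  | inv g hg ihg =>
    rw [commutatorElement_inv_left, ← commutatorElement_inv]
    simpa using (mem_normalizer_iff.mp (hX (inv_mem hg)) _).mp (inv_mem ihg)

theorem commutatorElement_zpow_mem {K : Subgroup G} {x y : G}
    (hx : x ∈ normalizer (K : Set G)) (h : ⁅x, y⁆ ∈ K) (p : ℤ) : ⁅x ^ p, y⁆ ∈ K :=
  commutatorElement_mem_of_mem_closure ((closure_le _).mpr (Set.singleton_subset_iff.mpr hx))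
    (by rintro _ rfl; exact h) (zpowers_eq_closure x ▸ zpow_mem_zpowers x p)

theorem commutator_closure_le {K : Subgroup G} {X : Set G}
    (hX : closure X ≤ normalizer (K : Set G)) (h : ∀ x ∈ X, ∀ y ∈ X, ⁅x, y⁆ ∈ K) :
    ⁅closure X, closure X⁆ ≤ K := by
  refine commutator_le.mpr fun g hg g' hg' => commutatorElement_mem_of_mem_closure hX ?_ hg
  intro x hx
  rw [← commutatorElement_inv]
  exact inv_mem (commutatorElement_mem_of_mem_closure hX (h · · x hx) hg')

end GroupLemmas

structure IsBraidFamily {G : Type*} [Group G] (m : ℕ) (x : ℕ → G) : Prop where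
  braid : ∀ {k}, k + 1 < m → x k * x (k + 1) * x k = x (k + 1) * x k * x (k + 1)
  commute : ∀ {k l}, l < m → k + 2 ≤ l → Commute (x k) (x l)

def ratios {G : Type*} [Group G] (m : ℕ) (x : ℕ → G) : Set G :=
  (fun k => x k * (x 0)⁻¹) '' Set.Ico 1 m

section Ratios

variable {G : Type*} [Group G] {m : ℕ} {x : ℕ → G}

theorem mul_inv_zero_mem_closure_ratios {k : ℕ} (hk : k < m) :
    x k * (x 0)⁻¹ ∈ closure (ratios m x) := by
  rcases k with _ | k
  · simp
  · exact subset_closure ⟨k + 1, ⟨by omega, hk⟩, rfl⟩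

theorem mul_inv_mem_closure_ratios {i j : ℕ} (hi : i < m) (hj : j < m) :
    x i * (x j)⁻¹ ∈ closure (ratios m x) := by
  simpa [mul_assoc] using mul_mem (mul_inv_zero_mem_closure_ratios hi)
    (inv_mem (mul_inv_zero_mem_closure_ratios (x := x) hj))

end Ratios

namespace IsBraidFamily

variable {G : Type*} [Group G] {m : ℕ} {x : ℕ → G}

theorem conj_succ (hx : IsBraidFamily m x) {k : ℕ} (hk : k + 1 < m) :
    x k * x (k + 1) * x k * (x k * x (k + 1))⁻¹ = x (k + 1) := by
  rw [hx.braid hk]; group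

theorem isConj_zero (hx : IsBraidFamily m x) {k : ℕ} (hk : k < m) : IsConj (x 0) (x k) := by
  induction k with
  | zero => rfl
  | succ k ih => exact (ih (by omega)).trans (isConj_iff.mpr ⟨_, hx.conj_succ hk⟩)

theorem ratios_subset_commutator (hx : IsBraidFamily m x) : ratios m x ⊆ commutator G := by
  rintro _ ⟨k, hk, rfl⟩
  obtain ⟨c, hc⟩ := isConj_iff.mp (hx.isConj_zero hk.2)
  show x k * (x 0)⁻¹ ∈ commutator G
  rw [← hc, commutator_def]
  exact commutator_mem_commutator (mem_top c) (mem_top (x 0))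

theorem inv_one_mul_zero_mem (hx : IsBraidFamily m x) (hm : 4 ≤ m) :
    (x 1)⁻¹ * x 0 ∈ closure (ratios m x) := by
  have hc : Commute (x 3) ((x 1)⁻¹ * x 0) :=
    (hx.commute (by omega) le_rfl).symm.inv_right.mul_right (hx.commute (by omega) (by omega)).symm
  have : (x 1)⁻¹ * x 0 = (x 3 * (x 0)⁻¹) * (x 1 * (x 0)⁻¹)⁻¹ * (x 3 * (x 0)⁻¹)⁻¹ := by
    calc (x 1)⁻¹ * x 0 = x 3 * ((x 1)⁻¹ * x 0) * (x 3)⁻¹ := by rw [hc.eq, mul_inv_cancel_right]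
      _ = _ := by group
  rw [this]
  exact mul_mem (mul_mem (mul_inv_zero_mem_closure_ratios (by omega))
    (inv_mem (mul_inv_zero_mem_closure_ratios (by omega))))
    (inv_mem (mul_inv_zero_mem_closure_ratios (by omega)))

theorem zero_mem_normalizer (hx : IsBraidFamily m x) (hm : 4 ≤ m) :
    x 0 ∈ normalizer (closure (ratios m x) : Set G) := by
  have hb : x 0 * x 1 * x 0 = x 1 * x 0 * x 1 := hx.braid (k := 0) (by omega)
  have h10 := hx.inv_one_mul_zero_mem hm
  refine mem_normalizer_closure_of_conj ?_ ?_ <;> rintro _ ⟨k, ⟨hk1, hkm⟩, rfl⟩ <;>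
    obtain rfl | hk := eq_or_lt_of_le hk1
  · have : x 0 * (x 1 * (x 0)⁻¹) * (x 0)⁻¹ = ((x 1)⁻¹ * x 0) * (x 1 * (x 0)⁻¹) := by
      calc _ = (x 1)⁻¹ * (x 1 * x 0 * x 1) * (x 0)⁻¹ * (x 0)⁻¹ := by group
        _ = _ := by rw [← hb]; group
    rw [this]
    exact mul_mem h10 (mul_inv_zero_mem_closure_ratios hkm)
  · have hc : Commute (x 0) (x k) := hx.commute hkm (by omega)
    have : x 0 * (x k * (x 0)⁻¹) * (x 0)⁻¹ = x k * (x 0)⁻¹ := by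
      rw [← mul_assoc, hc.eq]; group
    rw [this]
    exact mul_inv_zero_mem_closure_ratios hkm
  · have : (x 0)⁻¹ * (x 1 * (x 0)⁻¹) * x 0 = ((x 1)⁻¹ * x 0)⁻¹ := by group
    rw [this]
    exact inv_mem h10
  · have hc : Commute (x 0) (x k) := hx.commute hkm (by omega)
    have : (x 0)⁻¹ * (x k * (x 0)⁻¹) * x 0 = x k * (x 0)⁻¹ := by
      rw [← mul_assoc, hc.inv_left.eq]; group
    rw [this]
    exact mul_inv_zero_mem_closure_ratios hkm

theorem mem_normalizer (hx : IsBraidFamily m x) (hm : 4 ≤ m) {k : ℕ} (hk : k < m) :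
    x k ∈ normalizer (closure (ratios m x) : Set G) := by
  simpa using
    mul_mem (le_normalizer (mul_inv_zero_mem_closure_ratios hk)) (hx.zero_mem_normalizer hm)

theorem inv_mul_mem (hx : IsBraidFamily m x) (hm : 4 ≤ m) {i j : ℕ} (hi : i < m) (hj : j < m) :
    (x i)⁻¹ * x j ∈ closure (ratios m x) := by
  simpa [mul_assoc] using (mem_normalizer_iff.mp (inv_mem (hx.mem_normalizer hm hi)) _).mp
    (mul_inv_mem_closure_ratios hj hi)

end IsBraidFamily

namespace GenVirtBraid

variable {n : ℕ}

-- `σ n` and `ρ n` indexed by `ℕ`, with the junk value `1` from index `n - 1` on.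

variable (n) in
def sigma (k : ℕ) : GVB n := if h : k < n - 1 then σ n ⟨k, h⟩ else 1

variable (n) in
def rho (k : ℕ) : GVB n := if h : k < n - 1 then ρ n ⟨k, h⟩ else 1

theorem sigma_of_lt {k : ℕ} (h : k < n - 1) : sigma n k = σ n ⟨k, h⟩ := dif_pos h

theorem rho_of_lt {k : ℕ} (h : k < n - 1) : rho n k = ρ n ⟨k, h⟩ := dif_pos h

theorem sigma_val (i : Fin (n - 1)) : sigma n i = σ n i := dif_pos i.2

theorem rho_val (i : Fin (n - 1)) : rho n i = ρ n i := dif_pos i.2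

theorem sigma_braid {k : ℕ} (h : k + 1 < n - 1) :
    sigma n k * sigma n (k + 1) * sigma n k = sigma n (k + 1) * sigma n k * sigma n (k + 1) := by
  rw [sigma_of_lt (by omega), sigma_of_lt h]
  exact PresentedGroup.mk_eq_mk_of_mul_inv_mem (.inl <| .inl <| .inl <| .inl <| .inl <| .inr
    ⟨_, ⟨k + 1, h⟩, rfl, rfl⟩)

theorem rho_braid {k : ℕ} (h : k + 1 < n - 1) :
    rho n k * rho n (k + 1) * rho n k = rho n (k + 1) * rho n k * rho n (k + 1) := by
  rw [rho_of_lt (by omega), rho_of_lt h]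
  exact PresentedGroup.mk_eq_mk_of_mul_inv_mem (.inl <| .inl <| .inl <| .inr
    ⟨_, ⟨k + 1, h⟩, rfl, rfl⟩)

theorem sigma_commute {k l : ℕ} (hl : l < n - 1) (h : k + 2 ≤ l) :
    Commute (sigma n k) (sigma n l) := by
  rw [sigma_of_lt (by omega), sigma_of_lt hl]
  exact commutatorElement_eq_one_iff_commute.mp <| PresentedGroup.one_of_mem <|
    .inl <| .inl <| .inl <| .inl <| .inl <| .inl ⟨_, _, .inl (show k + 1 < l by omega), rfl⟩

theorem rho_commute {k l : ℕ} (hl : l < n - 1) (h : k + 2 ≤ l) :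
    Commute (rho n k) (rho n l) := by
  rw [rho_of_lt (by omega), rho_of_lt hl]
  exact commutatorElement_eq_one_iff_commute.mp <| PresentedGroup.one_of_mem <|
    .inl <| .inl <| .inl <| .inl <| .inr ⟨_, _, .inl (show k + 1 < l by omega), rfl⟩

theorem sigma_rho_commute {k l : ℕ} (hk : k < n - 1) (hl : l < n - 1)
    (h : k + 2 ≤ l ∨ l + 2 ≤ k) : Commute (sigma n k) (rho n l) := by
  rw [sigma_of_lt hk, rho_of_lt hl]
  exact commutatorElement_eq_one_iff_commute.mp <| PresentedGroup.one_of_mem <|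
    .inr ⟨_, _, show k + 1 < l ∨ l + 1 < k by omega, rfl⟩

theorem conj_rho_eq_rho_succ {k : ℕ} (h : k + 1 < n - 1) :
    sigma n k * sigma n (k + 1) * rho n k * (sigma n k * sigma n (k + 1))⁻¹ = rho n (k + 1) := by
  rw [mul_inv_eq_iff_eq_mul, ← mul_assoc, sigma_of_lt (k := k) (by omega), sigma_of_lt h,
    rho_of_lt (k := k) (by omega), rho_of_lt h]
  exact (PresentedGroup.mk_eq_mk_of_mul_inv_mem (rels := gvbRels n) (.inl <| .inr
    ⟨⟨k, by omega⟩, ⟨k + 1, h⟩, rfl, rfl⟩)).symm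

theorem conj_rho_succ_eq_rho {k : ℕ} (h : k + 1 < n - 1) :
    sigma n (k + 1) * sigma n k * rho n (k + 1) * (sigma n (k + 1) * sigma n k)⁻¹ = rho n k := by
  rw [mul_inv_eq_iff_eq_mul, ← mul_assoc, sigma_of_lt (k := k) (by omega), sigma_of_lt h,
    rho_of_lt (k := k) (by omega), rho_of_lt h]
  exact (PresentedGroup.mk_eq_mk_of_mul_inv_mem (rels := gvbRels n) (.inl <| .inl <| .inr
    ⟨⟨k, by omega⟩, ⟨k + 1, h⟩, rfl, rfl⟩)).symm

theorem isBraidFamily_sigma : IsBraidFamily (n - 1) (sigma n) := ⟨sigma_braid, sigma_commute⟩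

theorem isBraidFamily_rho : IsBraidFamily (n - 1) (rho n) := ⟨rho_braid, rho_commute⟩

variable (n) in
def commGens : Set (GVB n) :=
  ratios (n - 1) (sigma n) ∪ ratios (n - 1) (rho n) ∪ {⁅sigma n 0, rho n 0⁆}

variable (n) in
def lowSubgroup : Subgroup (GVB n) :=
  closure {sigma n 0, sigma n 1, rho n 0, rho n 1}

variable (n) in
def lowCommGens : Subgroup (GVB n) :=
  closure (commGens n) ⊓ centralizer {sigma n 3, rho n 3}

theorem closure_ratios_sigma_le : closure (ratios (n - 1) (sigma n)) ≤ closure (commGens n) :=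
  closure_mono (Set.subset_union_left.trans Set.subset_union_left)

theorem closure_ratios_rho_le : closure (ratios (n - 1) (rho n)) ≤ closure (commGens n) :=
  closure_mono (Set.subset_union_right.trans Set.subset_union_left)

theorem commutatorElement_sigma_rho_zero_mem : ⁅sigma n 0, rho n 0⁆ ∈ closure (commGens n) :=
  subset_closure (Or.inr rfl)

theorem sigma_mem_lowSubgroup {i : ℕ} (hi : i ≤ 1) : sigma n i ∈ lowSubgroup n := by
  obtain rfl | rfl := Nat.le_one_iff_eq_zero_or_eq_one.mp hi <;> exact subset_closure (by simp)

theorem rho_mem_lowSubgroup {i : ℕ} (hi : i ≤ 1) : rho n i ∈ lowSubgroup n := by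
  obtain rfl | rfl := Nat.le_one_iff_eq_zero_or_eq_one.mp hi <;> exact subset_closure (by simp)

theorem lowSubgroup_le_centralizer (hn : 5 ≤ n) :
    lowSubgroup n ≤ centralizer {sigma n 3, rho n 3} := by
  have hσ : ∀ i ≤ 1, sigma n i ∈ centralizer {sigma n 3, rho n 3} := fun i hi =>
    mem_centralizer_iff.mpr <| by
      rintro _ (rfl | rfl)
      exacts [(sigma_commute (by omega) (by omega)).eq.symm,
        (sigma_rho_commute (by omega) (by omega) (by omega)).eq.symm]
  have hρ : ∀ i ≤ 1, rho n i ∈ centralizer {sigma n 3, rho n 3} := fun i hi =>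
    mem_centralizer_iff.mpr <| by
      rintro _ (rfl | rfl)
      exacts [(sigma_rho_commute (by omega) (by omega) (by omega)).eq,
        (rho_commute (by omega) (by omega)).eq.symm]
  rw [lowSubgroup, closure_le]
  rintro _ (rfl | rfl | rfl | rfl)
  exacts [hσ 0 zero_le_one, hσ 1 le_rfl, hρ 0 zero_le_one, hρ 1 le_rfl]

theorem lowSubgroup_le_normalizer (hn : 5 ≤ n) :
    lowSubgroup n ≤ normalizer (lowCommGens n : Set (GVB n)) := by
  have hσ : ∀ i ≤ 1, sigma n i ∈ normalizer (lowCommGens n : Set (GVB n)) := fun i hi =>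
    mem_normalizer_inf_centralizer (Or.inl rfl)
      (lowSubgroup_le_centralizer hn (sigma_mem_lowSubgroup hi))
      (closure_ratios_sigma_le (mul_inv_mem_closure_ratios (by omega) (by omega)))
      (closure_ratios_sigma_le (isBraidFamily_sigma.inv_mul_mem (by omega) (by omega) (by omega)))
  have hρ : ∀ i ≤ 1, rho n i ∈ normalizer (lowCommGens n : Set (GVB n)) := fun i hi =>
    mem_normalizer_inf_centralizer (Or.inr rfl)
      (lowSubgroup_le_centralizer hn (rho_mem_lowSubgroup hi))
      (closure_ratios_rho_le (mul_inv_mem_closure_ratios (by omega) (by omega)))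
      (closure_ratios_rho_le (isBraidFamily_rho.inv_mul_mem (by omega) (by omega) (by omega)))
  rw [lowSubgroup, closure_le]
  rintro _ (rfl | rfl | rfl | rfl)
  exacts [hσ 0 zero_le_one, hσ 1 le_rfl, hρ 0 zero_le_one, hρ 1 le_rfl]

theorem conj_mem_lowCommGens (hn : 5 ≤ n) {g t : GVB n} (hg : g ∈ lowSubgroup n)
    (ht : t ∈ lowCommGens n) : g * t * g⁻¹ ∈ lowCommGens n :=
  (mem_normalizer_iff.mp (lowSubgroup_le_normalizer hn hg) t).mp ht

theorem mem_lowCommGens (hn : 5 ≤ n) {g : GVB n} (hN : g ∈ closure (commGens n))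
    (hlow : g ∈ lowSubgroup n) : g ∈ lowCommGens n :=
  mem_inf.mpr ⟨hN, lowSubgroup_le_centralizer hn hlow⟩

theorem commutatorElement_sigma_rho_zero_mem_low (hn : 5 ≤ n) :
    ⁅sigma n 0, rho n 0⁆ ∈ lowCommGens n :=
  mem_lowCommGens hn commutatorElement_sigma_rho_zero_mem <| (lowSubgroup n).commutator_le_self <|
    commutator_mem_commutator (sigma_mem_lowSubgroup zero_le_one) (rho_mem_lowSubgroup zero_le_one)

theorem rho_one_mul_inv_mem_low (hn : 5 ≤ n) : rho n 1 * (rho n 0)⁻¹ ∈ lowCommGens n :=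
  mem_lowCommGens hn (closure_ratios_rho_le (mul_inv_mem_closure_ratios (by omega) (by omega)))
    (mul_mem (rho_mem_lowSubgroup le_rfl) (inv_mem (rho_mem_lowSubgroup zero_le_one)))

theorem commutatorElement_sigma_rho_one_mem_low (hn : 5 ≤ n) :
    ⁅sigma n 1, rho n 1⁆ ∈ lowCommGens n := by
  have hσ : sigma n 0 * sigma n 1 * sigma n 0 * (sigma n 0 * sigma n 1)⁻¹ = sigma n 1 :=
    isBraidFamily_sigma.conj_succ (by omega)
  have hρ : sigma n 0 * sigma n 1 * rho n 0 * (sigma n 0 * sigma n 1)⁻¹ = rho n 1 :=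
    conj_rho_eq_rho_succ (by omega)
  rw [← hσ, ← hρ, ← conjugate_commutatorElement]
  exact conj_mem_lowCommGens hn (mul_mem (sigma_mem_lowSubgroup zero_le_one)
    (sigma_mem_lowSubgroup le_rfl)) (commutatorElement_sigma_rho_zero_mem_low hn)

theorem commutatorElement_rho_one_sigma_zero_mem_low (hn : 5 ≤ n) :
    ⁅rho n 1, sigma n 0⁆ ∈ lowCommGens n := by
  rw [commutatorElement_eq_of_conj_eq (conj_rho_eq_rho_succ (n := n) (k := 0) (by omega))]
  refine mul_mem (conj_mem_lowCommGens hn ?_ ?_) (conj_mem_lowCommGens hn ?_ ?_)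
  · exact mul_mem (sigma_mem_lowSubgroup zero_le_one) (sigma_mem_lowSubgroup le_rfl)
  · simpa using inv_mem (rho_one_mul_inv_mem_low hn)
  · exact sigma_mem_lowSubgroup zero_le_one
  · exact commutatorElement_sigma_rho_one_mem_low hn

theorem commutatorElement_rho_zero_sigma_one_mem_low (hn : 5 ≤ n) :
    ⁅rho n 0, sigma n 1⁆ ∈ lowCommGens n := by
  rw [commutatorElement_eq_of_conj_eq (conj_rho_succ_eq_rho (n := n) (k := 0) (by omega))]
  refine mul_mem (conj_mem_lowCommGens hn ?_ ?_) (conj_mem_lowCommGens hn ?_ ?_)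
  · exact mul_mem (sigma_mem_lowSubgroup le_rfl) (sigma_mem_lowSubgroup zero_le_one)
  · exact rho_one_mul_inv_mem_low hn
  · exact sigma_mem_lowSubgroup le_rfl
  · exact commutatorElement_sigma_rho_zero_mem_low hn

theorem commutatorElement_zpow_sigma_zero_rho_mem (hn : 5 ≤ n) (p : ℤ) {k : ℕ}
    (hk : k < n - 1) : ⁅sigma n 0 ^ p, rho n k⁆ ∈ closure (commGens n) := by
  obtain hk1 | hk2 := le_or_gt k 1
  · refine (mem_inf.mp (commutatorElement_zpow_mem
      (lowSubgroup_le_normalizer hn (sigma_mem_lowSubgroup zero_le_one)) ?_ p)).1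
    obtain rfl | rfl := Nat.le_one_iff_eq_zero_or_eq_one.mp hk1
    · exact commutatorElement_sigma_rho_zero_mem_low hn
    · rw [← commutatorElement_inv]
      exact inv_mem (commutatorElement_rho_one_sigma_zero_mem_low hn)
  · rw [((sigma_rho_commute (by omega) hk (by omega)).zpow_left p).commutator_eq]
    exact one_mem _

theorem commutatorElement_zpow_rho_zero_sigma_mem (hn : 5 ≤ n) (p : ℤ) {k : ℕ}
    (hk : k < n - 1) : ⁅rho n 0 ^ p, sigma n k⁆ ∈ closure (commGens n) := by
  obtain hk1 | hk2 := le_or_gt k 1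
  · refine (mem_inf.mp (commutatorElement_zpow_mem
      (lowSubgroup_le_normalizer hn (rho_mem_lowSubgroup zero_le_one)) ?_ p)).1
    obtain rfl | rfl := Nat.le_one_iff_eq_zero_or_eq_one.mp hk1
    · rw [← commutatorElement_inv]
      exact inv_mem (commutatorElement_sigma_rho_zero_mem_low hn)
    · exact commutatorElement_rho_zero_sigma_one_mem_low hn
  · rw [((sigma_rho_commute hk (by omega) (by omega)).symm.zpow_left p).commutator_eq]
    exact one_mem _

theorem zpowers_sigma_zero_le_normalizer (hn : 5 ≤ n) :
    zpowers (sigma n 0) ≤ normalizer (closure (commGens n) : Set (GVB n)) := by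
  rw [le_normalizer_closure_iff]
  rintro _ ⟨p, rfl⟩ _ ((⟨k, hk, rfl⟩ | ⟨k, hk, rfl⟩) | rfl)
  · refine closure_ratios_sigma_le ((mem_normalizer_iff.mp ?_ _).mp (subset_closure ⟨k, hk, rfl⟩))
    exact zpow_mem (isBraidFamily_sigma.zero_mem_normalizer (by omega)) p
  · exact conj_mul_inv_mem (commutatorElement_zpow_sigma_zero_rho_mem hn p hk.2)
      (commutatorElement_zpow_sigma_zero_rho_mem hn p (by omega))
      (subset_closure (Or.inl (Or.inr ⟨k, hk, rfl⟩)))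
  · exact (mem_inf.mp (conj_mem_lowCommGens hn (zpow_mem (sigma_mem_lowSubgroup zero_le_one) p)
      (commutatorElement_sigma_rho_zero_mem_low hn))).1

theorem zpowers_rho_zero_le_normalizer (hn : 5 ≤ n) :
    zpowers (rho n 0) ≤ normalizer (closure (commGens n) : Set (GVB n)) := by
  rw [le_normalizer_closure_iff]
  rintro _ ⟨p, rfl⟩ _ ((⟨k, hk, rfl⟩ | ⟨k, hk, rfl⟩) | rfl)
  · exact conj_mul_inv_mem (commutatorElement_zpow_rho_zero_sigma_mem hn p hk.2)
      (commutatorElement_zpow_rho_zero_sigma_mem hn p (by omega))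
      (subset_closure (Or.inl (Or.inl ⟨k, hk, rfl⟩)))
  · refine closure_ratios_rho_le ((mem_normalizer_iff.mp ?_ _).mp (subset_closure ⟨k, hk, rfl⟩))
    exact zpow_mem (isBraidFamily_rho.zero_mem_normalizer (by omega)) p
  · exact (mem_inf.mp (conj_mem_lowCommGens hn (zpow_mem (rho_mem_lowSubgroup zero_le_one) p)
      (commutatorElement_sigma_rho_zero_mem_low hn))).1

theorem eq_top_of_closure_commGens_le {H : Subgroup (GVB n)} (hN : closure (commGens n) ≤ H)
    (hσ : sigma n 0 ∈ H) (hρ : rho n 0 ∈ H) : H = ⊤ := by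
  rw [eq_top_iff, ← PresentedGroup.closure_range_of, closure_le]
  rintro _ ⟨i | i, rfl⟩
  · show σ n i ∈ H
    rw [← sigma_val]
    simpa using mul_mem (hN (closure_ratios_sigma_le (mul_inv_zero_mem_closure_ratios i.2))) hσ
  · show ρ n i ∈ H
    rw [← rho_val]
    simpa using mul_mem (hN (closure_ratios_rho_le (mul_inv_zero_mem_closure_ratios i.2))) hρ

theorem closure_commGens_normal (hn : 5 ≤ n) : (closure (commGens n)).Normal :=
  normalizer_eq_top_iff.mp <| eq_top_of_closure_commGens_le le_normalizer
    (zpowers_sigma_zero_le_normalizer hn (mem_zpowers _))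
    (zpowers_rho_zero_le_normalizer hn (mem_zpowers _))

theorem commutator_le_closure_commGens (hn : 5 ≤ n) :
    commutator (GVB n) ≤ closure (commGens n) := by
  have := closure_commGens_normal hn
  set N := closure (commGens n)
  have hX : closure ((N : Set (GVB n)) ∪ {sigma n 0, rho n 0}) = ⊤ :=
    eq_top_of_closure_commGens_le (fun g hg => subset_closure (Or.inl hg))
      (subset_closure (Or.inr (Or.inl rfl))) (subset_closure (Or.inr (Or.inr rfl)))
  rw [commutator_def, ← hX]
  refine commutator_closure_le (by rw [hX, normalizer_eq_top]) ?_
  rintro x (hx | hx) y hy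
  · exact commutator_le_left N ⊤ (commutator_mem_commutator hx (mem_top y))
  rcases hy with hy | hy
  · exact commutator_le_right ⊤ N (commutator_mem_commutator (mem_top x) hy)
  rcases hx with rfl | rfl <;> rcases hy with rfl | rfl
  · simp
  · exact commutatorElement_sigma_rho_zero_mem
  · rw [← commutatorElement_inv]
    exact inv_mem commutatorElement_sigma_rho_zero_mem
  · simp

theorem closure_commGens_le_commutator : closure (commGens n) ≤ commutator (GVB n) := by
  rw [closure_le]
  rintro _ ((h | h) | rfl)
  · exact isBraidFamily_sigma.ratios_subset_commutator h
  · exact isBraidFamily_rho.ratios_subset_commutator h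
  · rw [commutator_def]
    exact commutator_mem_commutator (mem_top _) (mem_top _)

theorem closure_commGens_eq_commutator (hn : 5 ≤ n) :
    closure (commGens n) = commutator (GVB n) :=
  le_antisymm closure_commGens_le_commutator (commutator_le_closure_commGens hn)

end GenVirtBraid

open GenVirtBraid in
/-- For every integer `n ≥ 5`, the commutator subgroup of `GVB_n` is generated by a set of
at most `3n - 7` elements. -/
theorem gvb_commutator_rank_le (n : ℕ) (hn : 5 ≤ n) :
    ∃ S : Finset (GVB n), S.card ≤ 3 * n - 7 ∧
      Subgroup.closure (S : Set (GVB n)) = commutator (GVB n) := by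
  classical
  refine ⟨(Finset.Ico 1 (n - 1)).image (fun k => sigma n k * (sigma n 0)⁻¹) ∪
    (Finset.Ico 1 (n - 1)).image (fun k => rho n k * (rho n 0)⁻¹) ∪ {⁅sigma n 0, rho n 0⁆},
    ?_, ?_⟩
  · grw [Finset.card_union_le, Finset.card_union_le, Finset.card_image_le, Finset.card_image_le]
    simp only [Nat.card_Ico, Finset.card_singleton]
    omega
  · rw [← closure_commGens_eq_commutator hn]
    simp [commGens, ratios]
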